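/- Let D and D' be KT orientations of graphs with disjoint vertex sets, let x → y be an arc of D and x' → y' an arc of D'. Then the digraph obtained by taking the disjoint union of D and D' and identifying x with x' and y with y' is again a KT orientation. -/

import Mathlib

/-- `l` is a directed path (list of distinct vertices, consecutive ones joined by arcs)
from `u` to `v` in the digraph `D`. -/
def IsDipath {V : Type*} (D : V → V → Prop) (u v : V) (l : List V) : Prop :=
  l.Chain' D ∧ l.Nodup ∧ l.head? = some u ∧ l.getLast? = some v

/-- `l` is a directed path between `u` and `v`, in either direction. -/
def DipathBetween {V : Type*} (D : V → V → Prop) (u v : V) (l : List V) : Prop :=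
  IsDipath D u v l ∨ IsDipath D v u l

/-- A digraph is a KT orientation if between any two vertices there is at most one
directed path (in either direction). -/
def IsKT {V : Type*} (D : V → V → Prop) : Prop :=
  ∀ u v : V, {l : List V | DipathBetween D u v l}.Subsingleton

/-- `D` is an orientation of the simple graph `G`. -/
def IsOrientation {V : Type*} (G : SimpleGraph V) (D : V → V → Prop) : Prop :=
  (∀ u v, G.Adj u v ↔ (D u v ∨ D v u)) ∧ ∀ u v, ¬ (D u v ∧ D v u)

/-- `G` admits a KT orientation. -/
def AdmitsKT {V : Type*} (G : SimpleGraph V) : Prop :=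
  ∃ D : V → V → Prop, IsOrientation G D ∧ IsKT D

/-- `a` and `b` are consecutive (in this order) in the list `l`. -/
def ConsecIn {V : Type*} (l : List V) (a b : V) : Prop :=
  (a, b) ∈ l.zip l.tail

/-!
In the glued digraph the copies `s` of `D` and `t` of `D'` carry all arcs, meet only in the
endpoints of the arc `x → y`, and the digraph is KT inside each of them. Hence `[x, y]` is the
only path between `x` and `y` inside `s` (or `t`), so a path ending in `s` but not contained in
it first runs through `t \ s` and then enters `s` once and for all, at a junction in `{x, y}`.
Two paths between `u` and `v` therefore lie both in `s`, both in `t`, or each crosses once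
between the two sides. Uniqueness inside `s` and inside `t` then compares the two parts on each
side, after extending the part that ends at `x` by the arc `x → y` when the junctions differ;
for paths in opposite directions it forces an endpoint into `s ∩ t`, which is impossible.
-/

open List Function

section Dipath

variable {V : Type*} {E : V → V → Prop} {u v w : V} {l : List V}

namespace IsDipath

theorem head_mem (h : IsDipath E u v l) : u ∈ l := mem_of_mem_head? h.2.2.1

theorem getLast_mem (h : IsDipath E u v l) : v ∈ l := mem_of_mem_getLast? h.2.2.2

theorem eq_singleton (h : IsDipath E u u l) : l = [u] := by
  obtain ⟨t, rfl⟩ := head?_eq_some_iff.1 h.2.2.1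
  cases t with
  | nil => rfl
  | cons b t =>
    have hu : u ∈ b :: t := mem_of_mem_getLast? (getLast?_cons_cons ▸ h.2.2.2)
    exact absurd hu (nodup_cons.1 h.2.1).1

theorem append_cons {P Q : List V} (h : IsDipath E u v (P ++ w :: Q)) :
    IsDipath E u w (P ++ [w]) ∧ IsDipath E w v (w :: Q) := by
  obtain ⟨hc, hn, hu, hv⟩ := h
  obtain ⟨hcP, hcQ⟩ := isChain_split.1 hc
  refine ⟨⟨hcP, hn.sublist (by simp), ?_, getLast?_concat⟩,
    ⟨hcQ, hn.sublist (by simp), rfl, ?_⟩⟩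
  · cases P <;> simpa using hu
  · simpa using hv

theorem concat (h : IsDipath E u v l) (hvw : E v w) (hw : w ∉ l) :
    IsDipath E u w (l ++ [w]) := by
  obtain ⟨hc, hn, hu, hv⟩ := h
  refine ⟨isChain_append.2 ⟨hc, isChain_singleton w, ?_⟩, ?_, ?_, getLast?_concat⟩
  · simp [hv, hvw]
  · simpa using hn.concat hw
  · cases l <;> simp_all

theorem exists_rel_of_ne (h : IsDipath E u v l) (huv : u ≠ v) :
    (∃ w, E u w) ∧ ∃ w, E w v := by
  obtain ⟨hc, -, hu, hv⟩ := h
  obtain ⟨t, rfl⟩ := head?_eq_some_iff.1 hu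
  cases t with
  | nil => exact absurd (by simpa using hv) huv
  | cons b t =>
    refine ⟨⟨b, (isChain_cons_cons.1 hc).1⟩, ?_⟩
    obtain ⟨m, hm⟩ := getLast?_eq_some_iff.1 hv
    rcases m.eq_nil_or_concat with rfl | ⟨m, a, rfl⟩
    · simp at hm
    · rw [concat_eq_append] at hm
      have hc : IsChain E (m ++ [a] ++ [v]) := hm ▸ hc
      exact ⟨a, (isChain_append.1 hc).2.2 a (by simp) v rfl⟩

end IsDipath

namespace DipathBetween

theorem left_mem (h : DipathBetween E u v l) : u ∈ l :=
  h.elim IsDipath.head_mem IsDipath.getLast_mem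

theorem right_mem (h : DipathBetween E u v l) : v ∈ l :=
  h.elim IsDipath.getLast_mem IsDipath.head_mem

theorem eq_singleton (h : DipathBetween E u u l) : l = [u] :=
  h.elim IsDipath.eq_singleton IsDipath.eq_singleton

end DipathBetween

end Dipath

section Gluing

variable {V : Type*} {E : V → V → Prop} {s t : Set V} {u v x y : V} {l l₁ l₂ : List V}

def IsKTOn (E : V → V → Prop) (s : Set V) : Prop :=
  ∀ u v : V, {l : List V | DipathBetween E u v l ∧ ∀ p ∈ l, p ∈ s}.Subsingleton

theorem IsKTOn.eq_of_isDipath_of_isDipath {l' : List V} (hs : IsKTOn E s)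
    (h : IsDipath E u v l) (hl : ∀ p ∈ l, p ∈ s)
    (h' : IsDipath E v u l') (hl' : ∀ p ∈ l', p ∈ s) : u = v := by
  have heq : l = l' := hs u v ⟨Or.inl h, hl⟩ ⟨Or.inr h', hl'⟩
  simpa [heq, h'.2.2.1, eq_comm] using h.2.2.1

structure GluedAlongArc (E : V → V → Prop) (s t : Set V) (x y : V) : Prop where
  rel_mem : ∀ p q, E p q → (p ∈ s ∧ q ∈ s) ∨ (p ∈ t ∧ q ∈ t)
  inter_subset : s ∩ t ⊆ {x, y}
  x_mem : x ∈ s ∩ t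
  y_mem : y ∈ s ∩ t
  rel : E x y
  ne : x ≠ y
  isKTOn_left : IsKTOn E s
  isKTOn_right : IsKTOn E t

namespace GluedAlongArc

theorem symm (hg : GluedAlongArc E s t x y) : GluedAlongArc E t s x y where
  rel_mem p q h := (hg.rel_mem p q h).symm
  inter_subset := Set.inter_comm s t ▸ hg.inter_subset
  x_mem := hg.x_mem.symm
  y_mem := hg.y_mem.symm
  rel := hg.rel
  ne := hg.ne
  isKTOn_left := hg.isKTOn_right
  isKTOn_right := hg.isKTOn_left

theorem eq_pair (hg : GluedAlongArc E s t x y) (h : DipathBetween E x y l)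
    (hl : ∀ p ∈ l, p ∈ s) : l = [x, y] :=
  hg.isKTOn_left x y ⟨h, hl⟩
    ⟨Or.inl ⟨isChain_pair.2 hg.rel, by simp [hg.ne], rfl, rfl⟩, by simp [hg.x_mem.1, hg.y_mem.1]⟩

theorem length_le_two (hg : GluedAlongArc E s t x y) (h : IsDipath E u v l)
    (hl : ∀ p ∈ l, p ∈ s) (hu : u ∈ t) (hv : v ∈ t) : l.length ≤ 2 := by
  by_cases huv : u = v
  · subst huv
    simp [h.eq_singleton]
  rcases hg.inter_subset ⟨hl u h.head_mem, hu⟩ with rfl | rfl <;>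
    rcases hg.inter_subset ⟨hl v h.getLast_mem, hv⟩ with rfl | rfl
  · exact absurd rfl huv
  · simp [hg.eq_pair (Or.inl h) hl]
  · simp [hg.eq_pair (Or.inr h) hl]
  · exact absurd rfl huv

theorem isDipath_concat (hg : GluedAlongArc E s t x y) (h : IsDipath E u x l)
    (hl : ∀ p ∈ l, p ∈ s) : IsDipath E u y (l ++ [y]) := by
  refine h.concat hg.rel fun hy => hg.ne ?_
  obtain ⟨P, Q, rfl⟩ := append_of_mem hy
  have hyx := hg.eq_pair (Or.inr h.append_cons.2) fun p hp => hl p (by simp_all)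
  exact (cons_eq_cons.1 hyx).1.symm

theorem exists_append_of_getLast_mem (hg : GluedAlongArc E s t x y) (h : IsDipath E u v l)
    (hv : v ∈ s) : ∃ Q j P, l = Q ++ j :: P ∧ (∀ q ∈ Q, q ∈ t ∧ q ∉ s) ∧
      (∀ p ∈ j :: P, p ∈ s) ∧ (Q ≠ [] → j ∈ t) := by
  induction l generalizing u with
  | nil => exact absurd h.head_mem not_mem_nil
  | cons a r ih =>
    obtain rfl : a = u := by simpa using h.2.2.1
    cases r with
    | nil =>
      obtain rfl : a = v := by simpa using h.2.2.2
      exact ⟨[], a, [], rfl, by simp, by simpa using hv, by simp⟩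
    | cons b r =>
      have hab : E a b := (isChain_cons_cons.1 h.1).1
      obtain ⟨Q, j, P, hl, hQ, hP, hj⟩ := ih (IsDipath.append_cons (P := [a]) h).2
      by_cases ha : a ∈ s
      · rcases Q with _ | ⟨q, Q⟩
        · exact ⟨[], a, j :: P, by simp [hl], by simp, by simp_all, by simp⟩
        · -- then `a :: b :: Q ++ [j]` is a path in `t` of length `≥ 3` between two vertices of `s`
          obtain ⟨rfl, -⟩ := cons_eq_cons.1 hl
          have hat : a ∈ t := by
            have := hg.rel_mem _ _ hab
            have := hQ b mem_cons_self
            tauto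
          have hpath : IsDipath E a j ((a :: b :: Q) ++ [j]) :=
            (IsDipath.append_cons (P := a :: b :: Q) (hl ▸ h)).1
          have hpt : ∀ p ∈ (a :: b :: Q) ++ [j], p ∈ t :=
            forall_mem_cons.2 ⟨hat, forall_mem_append.2
              ⟨fun q hq => (hQ q hq).1, forall_mem_singleton.2 (hj (cons_ne_nil _ _))⟩⟩
          have := hg.symm.length_le_two hpath hpt ha (hP j mem_cons_self)
          simp at this
      · have hab' : a ∈ t ∧ b ∈ t := by
          have := hg.rel_mem _ _ hab
          tauto
        refine ⟨a :: Q, j, P, by simp [hl], by simp_all, hP, fun _ => ?_⟩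
        rcases Q with _ | ⟨q, Q⟩
        · obtain ⟨rfl, -⟩ := cons_eq_cons.1 hl
          exact hab'.2
        · exact hj (cons_ne_nil q Q)

theorem mem_of_isDipath (hg : GluedAlongArc E s t x y) (h : IsDipath E u v l) (hu : u ∈ s)
    (hv : v ∈ s) : ∀ p ∈ l, p ∈ s := by
  obtain ⟨Q, j, P, rfl, hQ, hP, -⟩ := hg.exists_append_of_getLast_mem h hv
  rcases Q with _ | ⟨q, Q⟩
  · exact hP
  · obtain rfl : q = u := by simpa using h.2.2.1
    exact absurd hu (hQ q mem_cons_self).2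

theorem mem_of_dipathBetween (hg : GluedAlongArc E s t x y) (h : DipathBetween E u v l)
    (hu : u ∈ s) (hv : v ∈ s) : ∀ p ∈ l, p ∈ s :=
  h.elim (hg.mem_of_isDipath · hu hv) (hg.mem_of_isDipath · hv hu)

theorem exists_crossing (hg : GluedAlongArc E s t x y) (h : IsDipath E u v l) (hu : u ∉ s)
    (hv : v ∈ s) :
    ∃ Q j P, l = Q ++ j :: P ∧ (∀ q ∈ Q ++ [j], q ∈ t) ∧ ∀ p ∈ j :: P, p ∈ s := by
  obtain ⟨Q, j, P, rfl, hQ, hP, hj⟩ := hg.exists_append_of_getLast_mem h hv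
  have hQ' : Q ≠ [] := by
    rintro rfl
    exact hu (hP u h.head_mem)
  exact ⟨Q, j, P, rfl, forall_mem_append.2
    ⟨fun q hq => (hQ q hq).1, forall_mem_singleton.2 (hj hQ')⟩, hP⟩

theorem append_cons_eq {Q₁ P₁ Q₂ P₂ : List V} (hg : GluedAlongArc E s t x y)
    (h₁ : IsDipath E u v (Q₁ ++ x :: P₁)) (h₂ : IsDipath E u v (Q₂ ++ y :: P₂))
    (hQ₁ : ∀ q ∈ Q₁ ++ [x], q ∈ t) (hQ₂ : ∀ q ∈ Q₂ ++ [y], q ∈ t)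
    (hP₁ : ∀ p ∈ x :: P₁, p ∈ s) (hP₂ : ∀ p ∈ y :: P₂, p ∈ s) :
    Q₁ ++ x :: P₁ = Q₂ ++ y :: P₂ := by
  -- the `t`-part of the first path, extended by the arc `x → y`, is the `t`-part of the second
  obtain rfl : Q₂ = Q₁ ++ [x] :=
    append_cancel_right (hg.isKTOn_right u y ⟨Or.inl h₂.append_cons.1, hQ₂⟩
      ⟨Or.inl (hg.symm.isDipath_concat h₁.append_cons.1 hQ₁),
        forall_mem_append.2 ⟨hQ₁, forall_mem_singleton.2 hg.y_mem.2⟩⟩)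
  have h₂' : IsDipath E u v (Q₁ ++ x :: y :: P₂) := by simpa using h₂
  have hP₂' : ∀ p ∈ x :: y :: P₂, p ∈ s := forall_mem_cons.2 ⟨hg.x_mem.1, hP₂⟩
  rw [hg.isKTOn_left x v ⟨Or.inl h₁.append_cons.2, hP₁⟩ ⟨Or.inl h₂'.append_cons.2, hP₂'⟩]
  simp

theorem eq_of_isDipath_of_not_mem (hg : GluedAlongArc E s t x y) (h₁ : IsDipath E u v l₁)
    (h₂ : IsDipath E u v l₂) (hu : u ∉ s) (hv : v ∈ s) : l₁ = l₂ := by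
  obtain ⟨Q₁, j₁, P₁, rfl, hQ₁, hP₁⟩ := hg.exists_crossing h₁ hu hv
  obtain ⟨Q₂, j₂, P₂, rfl, hQ₂, hP₂⟩ := hg.exists_crossing h₂ hu hv
  by_cases hj : j₁ = j₂
  · subst hj
    rw [append_cancel_right (hg.isKTOn_right u j₁ ⟨Or.inl h₁.append_cons.1, hQ₁⟩
        ⟨Or.inl h₂.append_cons.1, hQ₂⟩),
      hg.isKTOn_left j₁ v ⟨Or.inl h₁.append_cons.2, hP₁⟩ ⟨Or.inl h₂.append_cons.2, hP₂⟩]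
  rcases hg.inter_subset ⟨hP₁ j₁ mem_cons_self, hQ₁ j₁ (by simp)⟩ with rfl | rfl <;>
    rcases hg.inter_subset ⟨hP₂ j₂ mem_cons_self, hQ₂ j₂ (by simp)⟩ with rfl | rfl
  · exact absurd rfl hj
  · exact hg.append_cons_eq h₁ h₂ hQ₁ hQ₂ hP₁ hP₂
  · exact (hg.append_cons_eq h₂ h₁ hQ₂ hQ₁ hP₂ hP₁).symm
  · exact absurd rfl hj

theorem not_isDipath_of_isDipath (hg : GluedAlongArc E s t x y) (h₁ : IsDipath E u v l₁)
    (hu : u ∉ s) (hut : u ∈ t) (hv : v ∈ s) (hvt : v ∉ t) : ¬IsDipath E v u l₂ := by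
  intro h₂
  obtain ⟨Q₁, j₁, P₁, rfl, hQ₁, hP₁⟩ := hg.exists_crossing h₁ hu hv
  obtain ⟨Q₂, j₂, P₂, rfl, hQ₂, hP₂⟩ := hg.symm.exists_crossing h₂ hvt hut
  -- `t`-paths `u → j₁` and `j₂ → u`, `s`-paths `j₁ → v` and `v → j₂`
  by_cases hj : j₁ = j₂
  · subst hj
    exact hu (hg.isKTOn_right.eq_of_isDipath_of_isDipath h₁.append_cons.1 hQ₁
      h₂.append_cons.2 hP₂ ▸ hP₁ j₁ mem_cons_self)
  rcases hg.inter_subset ⟨hP₁ j₁ mem_cons_self, hQ₁ j₁ (by simp)⟩ with rfl | rfl <;>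
    rcases hg.inter_subset ⟨hQ₂ j₂ (by simp), hP₂ j₂ mem_cons_self⟩ with rfl | rfl
  · exact hj rfl
  · have huy := hg.isKTOn_right.eq_of_isDipath_of_isDipath
      (hg.symm.isDipath_concat h₁.append_cons.1 hQ₁)
      (forall_mem_append.2 ⟨hQ₁, forall_mem_singleton.2 hg.y_mem.2⟩) h₂.append_cons.2 hP₂
    exact hu (huy ▸ hg.y_mem.1)
  · have hvy := hg.isKTOn_left.eq_of_isDipath_of_isDipath
      (hg.isDipath_concat h₂.append_cons.1 hQ₂)
      (forall_mem_append.2 ⟨hQ₂, forall_mem_singleton.2 hg.y_mem.1⟩) h₁.append_cons.2 hP₁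
    exact hvt (hvy ▸ hg.y_mem.2)
  · exact hj rfl

theorem eq_of_isDipath (hg : GluedAlongArc E s t x y) (h₁ : IsDipath E u v l₁)
    (h₂ : DipathBetween E u v l₂) : l₁ = l₂ := by
  by_cases huv : u = v
  · subst huv
    rw [h₁.eq_singleton, h₂.eq_singleton]
  obtain ⟨⟨w, huw⟩, ⟨w', hwv⟩⟩ := h₁.exists_rel_of_ne huv
  have hu : u ∈ s ∨ u ∈ t := (hg.rel_mem _ _ huw).imp And.left And.left
  have hv : v ∈ s ∨ v ∈ t := (hg.rel_mem _ _ hwv).imp And.right And.right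
  by_cases hs : u ∈ s ∧ v ∈ s
  · exact hg.isKTOn_left u v ⟨Or.inl h₁, hg.mem_of_isDipath h₁ hs.1 hs.2⟩
      ⟨h₂, hg.mem_of_dipathBetween h₂ hs.1 hs.2⟩
  by_cases ht : u ∈ t ∧ v ∈ t
  · exact hg.isKTOn_right u v ⟨Or.inl h₁, hg.symm.mem_of_isDipath h₁ ht.1 ht.2⟩
      ⟨h₂, hg.symm.mem_of_dipathBetween h₂ ht.1 ht.2⟩
  rcases h₂ with h₂ | h₂ <;> by_cases hvs : v ∈ s
  · exact hg.eq_of_isDipath_of_not_mem h₁ h₂ (fun hus => hs ⟨hus, hvs⟩) hvs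
  · exact hg.symm.eq_of_isDipath_of_not_mem h₁ h₂ (fun hut => ht ⟨hut, hv.resolve_left hvs⟩)
      (hv.resolve_left hvs)
  · exact absurd h₂ (hg.not_isDipath_of_isDipath h₁ (by tauto) (by tauto) hvs (by tauto))
  · exact absurd h₂ (hg.symm.not_isDipath_of_isDipath h₁ (by tauto) (by tauto) (by tauto) hvs)

theorem isKT (hg : GluedAlongArc E s t x y) : IsKT E := by
  rintro u v l₁ (h₁ | h₁) l₂ h₂
  · exact hg.eq_of_isDipath h₁ h₂
  · exact hg.eq_of_isDipath h₁ (Or.symm h₂)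

end GluedAlongArc

end Gluing

section Embedding

variable {V γ δ : Type*} {E : V → V → Prop}

theorem IsDipath.of_map {R : γ → γ → Prop} {e : γ → V} (he : Injective e)
    (harc : ∀ a b, E (e a) (e b) → R a b) {a b : γ} {m : List γ}
    (h : IsDipath E (e a) (e b) (m.map e)) : IsDipath R a b m :=
  ⟨((isChain_map e).1 h.1).imp fun a b => harc a b, h.2.1.of_map e,
    Option.map_injective he (by rw [← head?_map]; exact h.2.2.1),
    Option.map_injective he (by rw [← getLast?_map]; exact h.2.2.2)⟩

theorem DipathBetween.of_map {R : γ → γ → Prop} {e : γ → V} (he : Injective e)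
    (harc : ∀ a b, E (e a) (e b) → R a b) {a b : γ} {m : List γ}
    (h : DipathBetween E (e a) (e b) (m.map e)) : DipathBetween R a b m :=
  h.imp (·.of_map he harc) (·.of_map he harc)

theorem isKTOn_range {R : γ → γ → Prop} {e : γ → V} (he : Injective e)
    (harc : ∀ a b, E (e a) (e b) → R a b) (hR : IsKT R) : IsKTOn E (Set.range e) := by
  rintro u v l₁ ⟨h₁, hl₁⟩ l₂ ⟨h₂, hl₂⟩
  obtain ⟨m₁, rfl⟩ : l₁ ∈ Set.range (map e) := by rwa [Set.range_list_map]
  obtain ⟨m₂, rfl⟩ : l₂ ∈ Set.range (map e) := by rwa [Set.range_list_map]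
  obtain ⟨a, rfl⟩ := hl₁ u h₁.left_mem
  obtain ⟨b, rfl⟩ := hl₁ v h₁.right_mem
  rw [hR a b (h₁.of_map he harc) (h₂.of_map he harc)]

variable {R₁ : γ → γ → Prop} {R₂ : δ → δ → Prop} {e₁ : γ → V} {e₂ : δ → V}
  {x y : γ} {x' y' : δ}

theorem rel_of_map_rel (hR₂ : ∀ c d, ¬(R₂ c d ∧ R₂ d c)) (h₁ : R₁ x y) (h₂ : R₂ x' y')
    (heq : ∀ c c', e₁ c = e₂ c' ↔ c = x ∧ c' = x' ∨ c = y ∧ c' = y') {a b : γ}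
    (h : Relation.Map R₂ e₂ e₂ (e₁ a) (e₁ b)) : R₁ a b := by
  obtain ⟨c, d, hcd, hc, hd⟩ := h
  rcases (heq a c).1 hc.symm with ⟨rfl, rfl⟩ | ⟨rfl, rfl⟩ <;>
    rcases (heq b d).1 hd.symm with ⟨rfl, rfl⟩ | ⟨rfl, rfl⟩
  · exact (hR₂ _ _ ⟨hcd, hcd⟩).elim
  · exact h₁
  · exact (hR₂ _ _ ⟨h₂, hcd⟩).elim
  · exact (hR₂ _ _ ⟨hcd, hcd⟩).elim

theorem gluedAlongArc_sup_map (he₁ : Injective e₁) (he₂ : Injective e₂)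
    (hR₁ : ∀ a b, ¬(R₁ a b ∧ R₁ b a)) (hR₂ : ∀ c d, ¬(R₂ c d ∧ R₂ d c))
    (hKT₁ : IsKT R₁) (hKT₂ : IsKT R₂) (h₁ : R₁ x y) (h₂ : R₂ x' y')
    (heq : ∀ c c', e₁ c = e₂ c' ↔ c = x ∧ c' = x' ∨ c = y ∧ c' = y') :
    GluedAlongArc (Relation.Map R₁ e₁ e₁ ⊔ Relation.Map R₂ e₂ e₂) (Set.range e₁) (Set.range e₂)
      (e₁ x) (e₁ y) where
  rel_mem := by
    rintro _ _ (⟨a, b, -, rfl, rfl⟩ | ⟨a, b, -, rfl, rfl⟩)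
    exacts [Or.inl ⟨⟨a, rfl⟩, ⟨b, rfl⟩⟩, Or.inr ⟨⟨a, rfl⟩, ⟨b, rfl⟩⟩]
  inter_subset := by
    rintro _ ⟨⟨c, rfl⟩, ⟨c', hc'⟩⟩
    rcases (heq c c').1 hc'.symm with ⟨rfl, -⟩ | ⟨rfl, -⟩
    exacts [Or.inl rfl, Or.inr rfl]
  x_mem := ⟨⟨x, rfl⟩, ⟨x', ((heq x x').2 (Or.inl ⟨rfl, rfl⟩)).symm⟩⟩
  y_mem := ⟨⟨y, rfl⟩, ⟨y', ((heq y y').2 (Or.inr ⟨rfl, rfl⟩)).symm⟩⟩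
  rel := Or.inl ⟨x, y, h₁, rfl, rfl⟩
  ne := he₁.ne fun hxy => by subst hxy; exact hR₁ x x ⟨h₁, h₁⟩
  isKTOn_left := isKTOn_range he₁
    (fun _ _ h => h.elim (Relation.map_apply_apply he₁ he₁ _ _ _).1
      (rel_of_map_rel hR₂ h₁ h₂ heq))
    hKT₁
  isKTOn_right := isKTOn_range he₂
    (fun _ _ h => h.elim (rel_of_map_rel hR₁ h₂ h₁ fun c' c => by rw [eq_comm, heq]; tauto)
      (Relation.map_apply_apply he₂ he₂ _ _ _).1)
    hKT₂

end Embedding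

/-- Gluing two KT orientations of graphs on disjoint vertex sets along an arc
(identifying `x` with `x'` and `y` with `y'`) yields a KT orientation. -/
theorem kt_glue {α β : Type*} [DecidableEq β] (G : SimpleGraph α) (G' : SimpleGraph β)
    (D : α → α → Prop) (D' : β → β → Prop)
    (hor : IsOrientation G D) (hor' : IsOrientation G' D')
    (hKT : IsKT D) (hKT' : IsKT D')
    (x y : α) (x' y' : β) (hxy : D x y) (hxy' : D' x' y')
    (f : β → α ⊕ β)
    (hf : ∀ b, f b = if b = x' then Sum.inl x else if b = y' then Sum.inl y else Sum.inr b)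
    (E : α ⊕ β → α ⊕ β → Prop)
    (hE : ∀ p q, E p q ↔
      ((∃ a b : α, D a b ∧ p = Sum.inl a ∧ q = Sum.inl b) ∨
       (∃ a b : β, D' a b ∧ p = f a ∧ q = f b))) :
    IsKT E := by
  have hx'y' : x' ≠ y' := by
    rintro rfl
    exact hor'.2 _ _ ⟨hxy', hxy'⟩
  have hxy_ne : x ≠ y := by
    rintro rfl
    exact hor.2 _ _ ⟨hxy, hxy⟩
  have heq : ∀ a b, Sum.inl a = f b ↔ a = x ∧ b = x' ∨ a = y ∧ b = y' := by
    intro a b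
    rw [hf]
    split_ifs <;> simp_all [eq_comm]
  have hf_inj : Injective f := by
    intro a b h
    rw [hf a, hf b] at h
    split_ifs at h <;> simp_all
  obtain rfl : E = Relation.Map D Sum.inl Sum.inl ⊔ Relation.Map D' f f := by
    ext p q
    simp [hE, Relation.Map, eq_comm]
  exact (gluedAlongArc_sup_map Sum.inl_injective hf_inj hor.2 hor'.2 hKT hKT' hxy hxy' heq).isKT
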